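/- arXiv:2512.06349 — 2 statements merged into one kernel-verified Lean document; each statement's English description precedes it below -/
import Mathlib

section
/- Fix a G-measurable square-integrable initial state x₀ and an admissible policy u ∈ U, with trajectory (x_k). Assume E[x_kᵀx_k] > 0 for every k ∈ ℕ and ρ(u; x₀) > 0. Then J(x₀,u) = 2·log ρ(u; x₀). Consequently, if every admissible policy u ∈ U satisfies E[x_kᵀx_k] > 0 for all k and ρ(u; x₀) > 0, then inf_{u∈U} J(x₀,u) = 2·log(inf_{u∈U} ρ(u; x₀)), and a policy minimizes J(x₀,·) over U if and only if it minimizes ρ(·; x₀) over U. -/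
open Matrix MeasureTheory ProbabilityTheory
open scoped ENNReal Classical

noncomputable section

namespace SCS

/-! ### Matrix-analytic definitions -/

/-- Rayleigh-quotient definition of the largest eigenvalue of a symmetric matrix. -/
def lamMax {n : ℕ} (M : Matrix (Fin n) (Fin n) ℝ) : ℝ :=
  ⨆ x : {x : Fin n → ℝ // x ⬝ᵥ x = 1}, x.1 ⬝ᵥ M.mulVec x.1

/-- Rayleigh-quotient definition of the smallest eigenvalue of a symmetric matrix. -/
def lamMin {n : ℕ} (M : Matrix (Fin n) (Fin n) ℝ) : ℝ :=
  ⨅ x : {x : Fin n → ℝ // x ⬝ᵥ x = 1}, x.1 ⬝ᵥ M.mulVec x.1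

/-- Spectral norm (the operator norm induced by the Euclidean norm). -/
def specNorm {p q : ℕ} (M : Matrix (Fin p) (Fin q) ℝ) : ℝ :=
  Real.sqrt (lamMax (Mᵀ * M))

variable {n m : ℕ}

/-- `R(P) = BᵀPB + σ²·B̄ᵀPB̄`. -/
def Rop (σ : ℝ) (B Bbar : Matrix (Fin n) (Fin m) ℝ) (P : Matrix (Fin n) (Fin n) ℝ) :
    Matrix (Fin m) (Fin m) ℝ :=
  Bᵀ * P * B + σ ^ 2 • (Bbarᵀ * P * Bbar)

/-- `S(P) = AᵀPB + σ²·ĀᵀPB̄`. -/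
def Sop (σ : ℝ) (A Abar : Matrix (Fin n) (Fin n) ℝ) (B Bbar : Matrix (Fin n) (Fin m) ℝ)
    (P : Matrix (Fin n) (Fin n) ℝ) : Matrix (Fin n) (Fin m) ℝ :=
  Aᵀ * P * B + σ ^ 2 • (Abarᵀ * P * Bbar)

/-- `Φ(P) = AᵀPA + σ²·ĀᵀPĀ − S(P)·R(P)⁻¹·S(P)ᵀ`. -/
def Phi (σ : ℝ) (A Abar : Matrix (Fin n) (Fin n) ℝ) (B Bbar : Matrix (Fin n) (Fin m) ℝ)
    (P : Matrix (Fin n) (Fin n) ℝ) : Matrix (Fin n) (Fin n) ℝ :=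
  Aᵀ * P * A + σ ^ 2 • (Abarᵀ * P * Abar)
    - Sop σ A Abar B Bbar P * (Rop σ B Bbar P)⁻¹ * (Sop σ A Abar B Bbar P)ᵀ

/-- `K(P) = R(P)⁻¹·S(P)ᵀ`. -/
def Kgain (σ : ℝ) (A Abar : Matrix (Fin n) (Fin n) ℝ) (B Bbar : Matrix (Fin n) (Fin m) ℝ)
    (P : Matrix (Fin n) (Fin n) ℝ) : Matrix (Fin m) (Fin n) ℝ :=
  (Rop σ B Bbar P)⁻¹ * (Sop σ A Abar B Bbar P)ᵀ

/-- `C_A = λ_max(AAᵀ + σ²·ĀĀᵀ)`. -/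
def CA (σ : ℝ) (A Abar : Matrix (Fin n) (Fin n) ℝ) : ℝ :=
  lamMax (A * Aᵀ + σ ^ 2 • (Abar * Abarᵀ))

/-- `δ_τ = (τ/n)/((1−τ)·C_A + τ)`. -/
def deltaTau (σ : ℝ) (A Abar : Matrix (Fin n) (Fin n) ℝ) (τ : ℝ) : ℝ :=
  (τ / (n : ℝ)) / ((1 - τ) * CA σ A Abar + τ)

/-- The regularized normalized operator
`Φ̂_τ(P) = ((1−τ)·Φ(P) + (τ/n)·I) / Tr((1−τ)·Φ(P) + (τ/n)·I)`. -/
def PhiHat (σ : ℝ) (A Abar : Matrix (Fin n) (Fin n) ℝ) (B Bbar : Matrix (Fin n) (Fin m) ℝ)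
    (τ : ℝ) (P : Matrix (Fin n) (Fin n) ℝ) : Matrix (Fin n) (Fin n) ℝ :=
  (Matrix.trace ((1 - τ) • Phi σ A Abar B Bbar P
      + (τ / (n : ℝ)) • (1 : Matrix (Fin n) (Fin n) ℝ)))⁻¹ •
    ((1 - τ) • Phi σ A Abar B Bbar P + (τ / (n : ℝ)) • (1 : Matrix (Fin n) (Fin n) ℝ))

/-- Inverse of the positive-semidefinite square root (junk value `0` off the PSD cone),
so `invSqrt P = P^{−1/2}` for positive definite `P`. -/
def invSqrt {n : ℕ} (P : Matrix (Fin n) (Fin n) ℝ) : Matrix (Fin n) (Fin n) ℝ :=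
  if h : P.PosSemidef then
    ((h.1.eigenvectorUnitary : Matrix (Fin n) (Fin n) ℝ) * diagonal (Real.sqrt ∘ h.1.eigenvalues)
      * (star h.1.eigenvectorUnitary : Matrix (Fin n) (Fin n) ℝ))⁻¹ else 0

/-- `L(P) = λ_min(P^{−1/2}·Φ(P)·P^{−1/2})`. -/
def Lval (σ : ℝ) (A Abar : Matrix (Fin n) (Fin n) ℝ) (B Bbar : Matrix (Fin n) (Fin m) ℝ)
    (P : Matrix (Fin n) (Fin n) ℝ) : ℝ :=
  lamMin (invSqrt P * Phi σ A Abar B Bbar P * invSqrt P)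

/-- `U(P) = λ_max(P^{−1/2}·Φ(P)·P^{−1/2})`. -/
def Uval (σ : ℝ) (A Abar : Matrix (Fin n) (Fin n) ℝ) (B Bbar : Matrix (Fin n) (Fin m) ℝ)
    (P : Matrix (Fin n) (Fin n) ℝ) : ℝ :=
  lamMax (invSqrt P * Phi σ A Abar B Bbar P * invSqrt P)

/-- The trace-normalized slice `S_a = {X symmetric : X ⪰ a·I, Tr X = 1}`. -/
def Slice (a : ℝ) : Set (Matrix (Fin n) (Fin n) ℝ) :=
  {X | X.IsSymm ∧ (X - a • (1 : Matrix (Fin n) (Fin n) ℝ)).PosSemidef ∧ X.trace = 1}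

/-- `α_A = ‖A‖² + σ²·‖Ā‖²` (spectral norms). -/
def alphaA (σ : ℝ) (A Abar : Matrix (Fin n) (Fin n) ℝ) : ℝ :=
  specNorm A ^ 2 + σ ^ 2 * specNorm Abar ^ 2

/-- `α_S = ‖A‖·‖B‖ + σ²·‖Ā‖·‖B̄‖`. -/
def alphaS (σ : ℝ) (A Abar : Matrix (Fin n) (Fin n) ℝ) (B Bbar : Matrix (Fin n) (Fin m) ℝ) : ℝ :=
  specNorm A * specNorm B + σ ^ 2 * specNorm Abar * specNorm Bbar

/-- `α_R = ‖B‖² + σ²·‖B̄‖²`. -/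
def alphaR (σ : ℝ) (B Bbar : Matrix (Fin n) (Fin m) ℝ) : ℝ :=
  specNorm B ^ 2 + σ ^ 2 * specNorm Bbar ^ 2

/-- `c_R(a) = 1/(a·λ_min(R₀))`. -/
def cR (σ : ℝ) (B Bbar : Matrix (Fin n) (Fin m) ℝ) (a : ℝ) : ℝ :=
  1 / (a * lamMin (Bᵀ * B + σ ^ 2 • (Bbarᵀ * Bbar)))

/-- `L_Φ(a) = α_A + 2·α_S²·c_R(a) + α_S²·α_R·c_R(a)²`. -/
def LPhi (σ : ℝ) (A Abar : Matrix (Fin n) (Fin n) ℝ) (B Bbar : Matrix (Fin n) (Fin m) ℝ)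
    (a : ℝ) : ℝ :=
  alphaA σ A Abar + 2 * alphaS σ A Abar B Bbar ^ 2 * cR σ B Bbar a
    + alphaS σ A Abar B Bbar ^ 2 * alphaR σ B Bbar * cR σ B Bbar a ^ 2

/-- `C_Φ(a) = α_A + α_S²·c_R(a)`. -/
def CPhi (σ : ℝ) (A Abar : Matrix (Fin n) (Fin n) ℝ) (B Bbar : Matrix (Fin n) (Fin m) ℝ)
    (a : ℝ) : ℝ :=
  alphaA σ A Abar + alphaS σ A Abar B Bbar ^ 2 * cR σ B Bbar a

/-- The contraction modulus `Λ(τ)`. -/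
def LambdaTau (σ : ℝ) (A Abar : Matrix (Fin n) (Fin n) ℝ) (B Bbar : Matrix (Fin n) (Fin m) ℝ)
    (τ : ℝ) : ℝ :=
  (1 - τ) * LPhi σ A Abar B Bbar (deltaTau σ A Abar τ) / τ
    + (1 - τ) * ((1 - τ) * CPhi σ A Abar B Bbar (deltaTau σ A Abar τ) + τ / (n : ℝ))
        * (n : ℝ) * LPhi σ A Abar B Bbar (deltaTau σ A Abar τ) / τ ^ 2

/-- The directional derivative `DΦ(P)[H]`. -/
def DPhi (σ : ℝ) (A Abar : Matrix (Fin n) (Fin n) ℝ) (B Bbar : Matrix (Fin n) (Fin m) ℝ)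
    (P H : Matrix (Fin n) (Fin n) ℝ) : Matrix (Fin n) (Fin n) ℝ :=
  Aᵀ * H * A + σ ^ 2 • (Abarᵀ * H * Abar)
    - (Aᵀ * H * B + σ ^ 2 • (Abarᵀ * H * Bbar)) * (Rop σ B Bbar P)⁻¹ * (Sop σ A Abar B Bbar P)ᵀ
    - Sop σ A Abar B Bbar P * (Rop σ B Bbar P)⁻¹ * (Bᵀ * H * A + σ ^ 2 • (Bbarᵀ * H * Abar))
    + Sop σ A Abar B Bbar P * (Rop σ B Bbar P)⁻¹ * (Bᵀ * H * B + σ ^ 2 • (Bbarᵀ * H * Bbar))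
        * (Rop σ B Bbar P)⁻¹ * (Sop σ A Abar B Bbar P)ᵀ

/-- `s_τ(P) = Tr((1−τ)·Φ(P) + (τ/n)·I)`. -/
def sTau (σ : ℝ) (A Abar : Matrix (Fin n) (Fin n) ℝ) (B Bbar : Matrix (Fin n) (Fin m) ℝ)
    (τ : ℝ) (P : Matrix (Fin n) (Fin n) ℝ) : ℝ :=
  Matrix.trace ((1 - τ) • Phi σ A Abar B Bbar P + (τ / (n : ℝ)) • (1 : Matrix (Fin n) (Fin n) ℝ))

/-- The directional derivative
`DΦ̂_τ(P)[H] = ((1−τ)/s_τ(P))·(DΦ(P)[H] − Φ̂_τ(P)·Tr(DΦ(P)[H]))`. -/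
def DPhiHat (σ : ℝ) (A Abar : Matrix (Fin n) (Fin n) ℝ) (B Bbar : Matrix (Fin n) (Fin m) ℝ)
    (τ : ℝ) (P H : Matrix (Fin n) (Fin n) ℝ) : Matrix (Fin n) (Fin n) ℝ :=
  ((1 - τ) / sTau σ A Abar B Bbar τ P) •
    (DPhi σ A Abar B Bbar P H
      - Matrix.trace (DPhi σ A Abar B Bbar P H) • PhiHat σ A Abar B Bbar τ P)

/-- The local Lipschitz modulus `Lip(P,τ) = sup{‖DΦ̂_τ(P)[H]‖ : H symmetric, ‖H‖ = 1}`. -/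
def LipMod (σ : ℝ) (A Abar : Matrix (Fin n) (Fin n) ℝ) (B Bbar : Matrix (Fin n) (Fin m) ℝ)
    (τ : ℝ) (P : Matrix (Fin n) (Fin n) ℝ) : ℝ :=
  ⨆ H : {H : Matrix (Fin n) (Fin n) ℝ // H.IsSymm ∧ specNorm H = 1},
    specNorm (DPhiHat σ A Abar B Bbar τ P H.1)

/-! ### Probabilistic definitions -/

/-- The Gaussian measure on `ℝ` with mean `0` and variance `σ²`. -/
def gauss (σ : ℝ) : Measure ℝ := gaussianReal 0 ⟨σ ^ 2, sq_nonneg σ⟩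

/-- The Gaussian expectation `E_ω[((A+Āω)x + (B+B̄ω)v)ᵀ·P·((A+Āω)x + (B+B̄ω)v)]`. -/
def qform (σ : ℝ) (A Abar : Matrix (Fin n) (Fin n) ℝ) (B Bbar : Matrix (Fin n) (Fin m) ℝ)
    (P : Matrix (Fin n) (Fin n) ℝ) (x : Fin n → ℝ) (v : Fin m → ℝ) : ℝ :=
  ∫ s, (((A + s • Abar).mulVec x + (B + s • Bbar).mulVec v) ⬝ᵥ
      P.mulVec ((A + s • Abar).mulVec x + (B + s • Bbar).mulVec v)) ∂(gauss σ)

/-- The data of the stochastic control system: a probability space `(Ω, F, Pr)`,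
system matrices `A, Ā, B, B̄`, a noise level `σ > 0`, an i.i.d. sequence `w` of
Gaussian random variables with mean `0` and variance `σ²`, and a sub-σ-algebra `G`
independent of the noise. -/
structure Ctx (n m : ℕ) (Ω : Type) [mΩ : MeasurableSpace Ω] where
  Pr : Measure Ω
  isProb : IsProbabilityMeasure Pr
  σ : ℝ
  hσ : 0 < σ
  A : Matrix (Fin n) (Fin n) ℝ
  Abar : Matrix (Fin n) (Fin n) ℝ
  B : Matrix (Fin n) (Fin m) ℝ
  Bbar : Matrix (Fin n) (Fin m) ℝ
  w : ℕ → Ω → ℝ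
  hw_meas : ∀ k, Measurable (w k)
  hw_gauss : ∀ k, Pr.map (w k) = gauss σ
  hw_iid : iIndepFun w Pr
  G : MeasurableSpace Ω
  hG : G ≤ mΩ
  hw_indep_G : Indep (⨆ k, MeasurableSpace.comap (w k) inferInstance) G Pr

variable {Ω : Type} [MeasurableSpace Ω]

/-- The filtration `F_k = G ∨ σ(ω₀, …, ω_{k−1})`. -/
def Ctx.Fk (C : Ctx n m Ω) (k : ℕ) : MeasurableSpace Ω :=
  C.G ⊔ ⨆ i ∈ Finset.range k, MeasurableSpace.comap (C.w i) inferInstance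

/-- Admissible policies: `u_k` is `F_k`-measurable and square-integrable. -/
def Ctx.Admissible (C : Ctx n m Ω) (u : ℕ → Ω → Fin m → ℝ) : Prop :=
  ∀ k, Measurable[C.Fk k] (u k) ∧ MemLp (u k) 2 C.Pr

/-- Admissible initial states: `G`-measurable and square-integrable. -/
def Ctx.InitOK (C : Ctx n m Ω) (x : Ω → Fin n → ℝ) : Prop :=
  Measurable[C.G] x ∧ MemLp x 2 C.Pr

/-- The state trajectory `x_{k+1} = (A + Ā·ω_k)x_k + (B + B̄·ω_k)u_k`. -/
def Ctx.traj (C : Ctx n m Ω) (x0 : Ω → Fin n → ℝ) (u : ℕ → Ω → Fin m → ℝ) :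
    ℕ → Ω → Fin n → ℝ
  | 0 => x0
  | k + 1 => fun s =>
      (C.A + C.w k s • C.Abar).mulVec (C.traj x0 u k s)
      + (C.B + C.w k s • C.Bbar).mulVec (u k s)

/-- `E[xᵀx]`. -/
def msSq {n : ℕ} (Pr : Measure Ω) (x : Ω → Fin n → ℝ) : ℝ := ∫ s, x s ⬝ᵥ x s ∂Pr

/-- The mean-square norm `‖x‖_ms = (E[xᵀx])^{1/2}`. -/
def msNorm {n : ℕ} (Pr : Measure Ω) (x : Ω → Fin n → ℝ) : ℝ := Real.sqrt (msSq Pr x)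

/-- The mean-square stabilizing rate `ρ(u)` of a policy. -/
def Ctx.rate (C : Ctx n m Ω) (u : ℕ → Ω → Fin m → ℝ) : ℝ :=
  sInf {ρ : ℝ | 0 ≤ ρ ∧ ∃ κ : ℝ, 0 ≤ κ ∧ ∀ x0, C.InitOK x0 → ∀ k : ℕ,
    msSq C.Pr (C.traj x0 u k) ≤ κ * ρ ^ (2 * k) * msSq C.Pr x0}

/-- The optimal stabilizing rate `ρ* = inf_{u ∈ U} ρ(u)`. -/
def Ctx.rhoStar (C : Ctx n m Ω) : ℝ :=
  sInf {r : ℝ | ∃ u, C.Admissible u ∧ r = C.rate u}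

/-- `η(x) = inf_{u ∈ U} sup_{k ∈ ℕ} ‖x_k‖_ms/(ρ*)^k` (with values in `[0,∞]`). -/
def Ctx.eta (C : Ctx n m Ω) (x : Ω → Fin n → ℝ) : ℝ≥0∞ :=
  ⨅ (u : ℕ → Ω → Fin m → ℝ) (_ : C.Admissible u),
    ⨆ k : ℕ, ENNReal.ofReal (msNorm C.Pr (C.traj x u k) / C.rhoStar ^ k)

/-- The per-trajectory mean-square stabilizing rate `ρ(u; x₀)`. -/
def Ctx.rateAt (C : Ctx n m Ω) (x0 : Ω → Fin n → ℝ) (u : ℕ → Ω → Fin m → ℝ) : ℝ :=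
  sInf {ρ : ℝ | 0 ≤ ρ ∧ ∃ κ : ℝ, 0 ≤ κ ∧ ∀ k : ℕ,
    msSq C.Pr (C.traj x0 u k) ≤ κ * ρ ^ (2 * k) * msSq C.Pr x0}

/-- The cost `J(x₀,u) = limsup_k (1/k)·log(E[x_kᵀx_k]/E[x₀ᵀx₀])`. -/
def Ctx.J (C : Ctx n m Ω) (x0 : Ω → Fin n → ℝ) (u : ℕ → Ω → Fin m → ℝ) : ℝ :=
  Filter.limsup
    (fun k : ℕ => (1 / (k : ℝ)) * Real.log (msSq C.Pr (C.traj x0 u k) / msSq C.Pr x0))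
    Filter.atTop

/-- Feedback policies: `u_k = μ_k(x_k)` for Borel-measurable `μ_k`. -/
def Ctx.IsFeedback (C : Ctx n m Ω) (x0 : Ω → Fin n → ℝ) (u : ℕ → Ω → Fin m → ℝ) : Prop :=
  ∃ μ : ℕ → (Fin n → ℝ) → Fin m → ℝ, (∀ k, Measurable (μ k)) ∧
    ∀ k s, u k s = μ k (C.traj x0 u k s)

/-- The closed-loop trajectory under a stationary feedback law `μ`. -/
def Ctx.fbTraj (C : Ctx n m Ω) (x0 : Ω → Fin n → ℝ) (μ : (Fin n → ℝ) → Fin m → ℝ) :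
    ℕ → Ω → Fin n → ℝ
  | 0 => x0
  | k + 1 => fun s =>
      (C.A + C.w k s • C.Abar).mulVec (C.fbTraj x0 μ k s)
      + (C.B + C.w k s • C.Bbar).mulVec (μ (C.fbTraj x0 μ k s))

/-- The stationary policy `u* given by `u*_k = μ(x*_k)` along its own closed-loop
trajectory, for a stationary feedback law `μ`. -/
def Ctx.fbPolicy (C : Ctx n m Ω) (x0 : Ω → Fin n → ℝ) (μ : (Fin n → ℝ) → Fin m → ℝ) :
    ℕ → Ω → Fin m → ℝ :=
  fun k s => μ (C.fbTraj x0 μ k s)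

/-- The linear feedback policy `u*_k = −K·x*_k` along its own trajectory. -/
def Ctx.linFbPolicy (C : Ctx n m Ω) (x0 : Ω → Fin n → ℝ) (K : Matrix (Fin m) (Fin n) ℝ) :
    ℕ → Ω → Fin m → ℝ :=
  C.fbPolicy x0 (fun x => -(K.mulVec x))

/-- `ξ_♯(x) = inf_{v ∈ ℝ^m} ‖(A + Ā·ω)x + (B + B̄·ω)v‖_ms`, realized with `ω = ω₀`. -/
def Ctx.xiSharp (C : Ctx n m Ω) (x : Ω → Fin n → ℝ) : ℝ :=
  ⨅ v : Fin m → ℝ, msNorm C.Pr (fun s =>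
    (C.A + C.w 0 s • C.Abar).mulVec (x s) + (C.B + C.w 0 s • C.Bbar).mulVec v)

/-- Extended-real logarithm: `log t` for `t > 0` and `−∞` for `t ≤ 0`. -/
def elog (t : ℝ) : EReal := if t ≤ 0 then ⊥ else ((Real.log t : ℝ) : EReal)

/-- The cost `J(x₀,u)` interpreted with values in `[−∞,∞]`. -/
def Ctx.Je (C : Ctx n m Ω) (x0 : Ω → Fin n → ℝ) (u : ℕ → Ω → Fin m → ℝ) : EReal :=
  Filter.limsup
    (fun k : ℕ => ((1 / (k : ℝ) : ℝ) : EReal) * elog (msSq C.Pr (C.traj x0 u k) / msSq C.Pr x0))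
    Filter.atTop

/-!
Write `b k = E[x_kᵀx_k]`. The set of feasible rates `ρ` (those with `b k ≤ κ ρ^{2k} b 0`) is
an up-set with infimum `c = ρ(u; x₀)`. For `r > c` the bound `b k / b 0 ≤ κ r^{2k}` gives
`(1/k) log (b k / b 0) ≤ (log κ)/k + 2 log r`, so `J ≤ 2 log r`. For `0 < r < c` the sequence
`b k / b 0` cannot stay eventually below `r^{2k}`, since a bound on a tail extends to all of `ℕ`
after enlarging `κ`; hence `(1/k) log (b k / b 0) ≥ 2 log r` infinitely often and `J ≥ 2 log r`.
The statements about infima and minimizers follow because `r ↦ 2 log r` is increasing and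
continuous on `(0, ∞)`.
-/

open Filter Topology Real

def growthBounds (p : ℕ) (b : ℕ → ℝ) : Set ℝ :=
  {ρ | 0 ≤ ρ ∧ ∃ κ : ℝ, 0 ≤ κ ∧ ∀ k : ℕ, b k ≤ κ * ρ ^ (p * k) * b 0}

section growthBounds

variable {p : ℕ} {b : ℕ → ℝ} {r : ℝ}

lemma mem_growthBounds_of_sInf_lt (hb0 : 0 ≤ b 0) (hne : (growthBounds p b).Nonempty)
    (hr : sInf (growthBounds p b) < r) : r ∈ growthBounds p b := by
  obtain ⟨ρ, ⟨hρ, κ, hκ, hbound⟩, hρr⟩ := exists_lt_of_csInf_lt hne hr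
  refine ⟨hρ.trans hρr.le, κ, hκ, fun k => (hbound k).trans ?_⟩
  gcongr

lemma log_div_le_of_mem_growthBounds (hb : ∀ k, 0 < b k) (hr : r ∈ growthBounds p b)
    (hr0 : 0 < r) :
    ∃ κ : ℝ, ∀ k : ℕ, 0 < k → 1 / (k : ℝ) * log (b k / b 0) ≤ log κ / k + p * log r := by
  obtain ⟨-, κ, -, hbound⟩ := hr
  have hκ1 : 1 ≤ κ := by
    have := hbound 0
    simp only [mul_zero, pow_zero, mul_one] at this
    exact (le_mul_iff_one_le_left (hb 0)).mp this
  refine ⟨κ, fun k hk => ?_⟩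
  have hk' : (0 : ℝ) < k := Nat.cast_pos.mpr hk
  have hlog : log (b k / b 0) ≤ log κ + (p * k) * log r := by
    calc log (b k / b 0) ≤ log (κ * r ^ (p * k)) := by
          gcongr
          · exact div_pos (hb k) (hb 0)
          · exact (div_le_iff₀ (hb 0)).mpr (hbound k)
      _ = log κ + (p * k) * log r := by
          rw [log_mul (by positivity) (by positivity), log_pow]
          push_cast
          ring
  calc 1 / (k : ℝ) * log (b k / b 0) ≤ 1 / k * (log κ + (p * k) * log r) := by gcongr
    _ = log κ / k + p * log r := by field_simp

lemma frequently_log_div_ge_of_notMem_growthBounds (hb : ∀ k, 0 < b k) (hr0 : 0 < r)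
    (hr : r ∉ growthBounds p b) :
    ∃ᶠ k : ℕ in atTop, p * log r ≤ 1 / (k : ℝ) * log (b k / b 0) := by
  have hexceed : ∃ᶠ k in atTop, b 0 * r ^ (p * k) < b k := by
    refine fun htail => hr ⟨hr0.le, ?_⟩
    simp only [not_lt] at htail
    have hO : b =O[atTop] fun k => b 0 * r ^ (p * k) := by
      refine Asymptotics.IsBigO.of_bound 1 (htail.mono fun k hk => ?_)
      rw [Real.norm_of_nonneg (hb k).le, Real.norm_of_nonneg (by have := hb 0; positivity)]
      linarith
    obtain ⟨κ, hκ, hbound⟩ := Asymptotics.bound_of_isBigO_nat_atTop hO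
    refine ⟨κ, hκ.le, fun k => ?_⟩
    have hk := hbound (by have := hb 0; positivity : b 0 * r ^ (p * k) ≠ 0)
    rwa [Real.norm_of_nonneg (hb k).le, Real.norm_of_nonneg (by have := hb 0; positivity),
      ← mul_assoc, mul_right_comm] at hk
  refine (hexceed.and_eventually (eventually_gt_atTop 0)).mono fun k ⟨hk, hk0⟩ => ?_
  have hk' : (0 : ℝ) < k := Nat.cast_pos.mpr hk0
  have hlog : (p * k) * log r ≤ log (b k / b 0) := by
    rw [← Nat.cast_mul, ← log_pow]
    gcongr
    rw [le_div_iff₀ (hb 0), mul_comm]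
    exact hk.le
  calc p * log r = 1 / (k : ℝ) * ((p * k) * log r) := by field_simp
    _ ≤ 1 / (k : ℝ) * log (b k / b 0) := by gcongr

theorem limsup_log_div_eq (hp : 0 < p) (hb : ∀ k, 0 < b k)
    (hc : 0 < sInf (growthBounds p b)) :
    limsup (fun k : ℕ => 1 / (k : ℝ) * log (b k / b 0)) atTop
      = p * log (sInf (growthBounds p b)) := by
  set c := sInf (growthBounds p b)
  have hne : (growthBounds p b).Nonempty :=
    Set.nonempty_iff_ne_empty.mpr fun h => by simp [c, h] at hc
  have hp' : (0 : ℝ) < p := Nat.cast_pos.mpr hp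
  have hexp : ∀ y, p * log (exp (y / p)) = y := fun y => by rw [log_exp]; field_simp
  have upper : ∀ r, c < r → ∃ g : ℕ → ℝ, (fun k : ℕ => 1 / (k : ℝ) * log (b k / b 0)) ≤ᶠ[atTop] g
      ∧ Tendsto g atTop (𝓝 (p * log r)) := by
    intro r hr
    obtain ⟨κ, hκ⟩ := log_div_le_of_mem_growthBounds hb
      (mem_growthBounds_of_sInf_lt (hb 0).le hne hr) (hc.trans hr)
    exact ⟨_, (eventually_gt_atTop 0).mono hκ,
      by simpa using (tendsto_const_div_atTop_nhds_zero_nat (log κ)).add_const (p * log r)⟩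
  have lower : ∀ r, 0 < r → r < c → ∃ᶠ k : ℕ in atTop, p * log r ≤ 1 / (k : ℝ) * log (b k / b 0) :=
    fun r hr0 hr => frequently_log_div_ge_of_notMem_growthBounds hb hr0
      fun hmem => (csInf_le ⟨0, fun _ h => h.1⟩ hmem).not_gt hr
  have hcobdd := IsCoboundedUnder.of_frequently_ge (lower (c / 2) (by positivity) (by linarith))
  have hbdd : IsBoundedUnder (· ≤ ·) atTop fun k : ℕ => 1 / (k : ℝ) * log (b k / b 0) := by
    obtain ⟨g, hfg, hg⟩ := upper (c + 1) (by linarith)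
    exact hg.isBoundedUnder_le.mono_le hfg
  refine le_antisymm (le_of_forall_gt_imp_ge_of_dense fun y hy => ?_)
    (le_of_forall_lt_imp_le_of_dense fun y hy => ?_)
  · have hcr : c < exp (y / p) := by
      rw [← exp_log hc, exp_lt_exp, lt_div_iff₀ hp', mul_comm]
      exact hy
    obtain ⟨g, hfg, hg⟩ := upper _ hcr
    calc _ ≤ limsup g atTop := limsup_le_limsup hfg hcobdd hg.isBoundedUnder_le
      _ = y := by rw [hg.limsup_eq, hexp]
  · have hrc : exp (y / p) < c := by
      rw [← exp_log hc, exp_lt_exp, div_lt_iff₀ hp', mul_comm]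
      exact hy
    simpa only [hexp] using le_limsup_of_frequently_le (lower _ (exp_pos _) hrc) hbdd

end growthBounds

lemma sInf_image_log {S : Set ℝ} (hS : ∀ x ∈ S, 0 < x) : sInf (log '' S) = log (sInf S) := by
  rcases S.eq_empty_or_nonempty with rfl | hne
  · simp
  rcases (le_csInf hne fun x hx => (hS x hx).le).eq_or_lt with h | h
  · -- `log` is unbounded below near `0 = sInf S`, and `sInf` of an unbounded set is `0`
    rw [← h, log_zero, Real.sInf_of_not_bddBelow]
    rintro ⟨L, hL⟩
    obtain ⟨x, hx, hxL⟩ := exists_lt_of_csInf_lt hne (h ▸ exp_pos (L - 1))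
    have := (log_lt_log (hS x hx) hxL).trans_eq (log_exp _)
    linarith [hL ⟨x, hx, rfl⟩]
  · exact ((strictMonoOn_log.monotoneOn.mono hS).map_csInf_of_continuousWithinAt
      (continuousAt_log h.ne').continuousWithinAt hne ⟨0, fun x hx => (hS x hx).le⟩).symm

lemma sInf_image_mul_log {a : ℝ} (ha : 0 ≤ a) {S : Set ℝ} (hS : ∀ x ∈ S, 0 < x) :
    sInf ((fun x => a * log x) '' S) = a * log (sInf S) := by
  rw [← sInf_image_log hS, ← smul_eq_mul, ← Real.sInf_smul_of_nonneg ha, ← Set.image_smul,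
    Set.image_image]
  rfl

lemma Ctx.J_eq_two_mul_log_rateAt (C : Ctx n m Ω) {x0 : Ω → Fin n → ℝ}
    {u : ℕ → Ω → Fin m → ℝ} (hpos : ∀ k : ℕ, 0 < msSq C.Pr (C.traj x0 u k))
    (hr : 0 < C.rateAt x0 u) : C.J x0 u = 2 * log (C.rateAt x0 u) := by
  have h := limsup_log_div_eq (p := 2) two_pos hpos hr
  rw [Nat.cast_ofNat] at h
  exact h

theorem J_eq_two_log_rate_general {n m : ℕ} {Ω : Type} [MeasurableSpace Ω] (C : Ctx n m Ω)
    (x0 : Ω → Fin n → ℝ)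
    (u : ℕ → Ω → Fin m → ℝ)
    (hpos : ∀ k : ℕ, 0 < msSq C.Pr (C.traj x0 u k))
    (hr : 0 < C.rateAt x0 u) :
    C.J x0 u = 2 * Real.log (C.rateAt x0 u) ∧
    ((∀ u' : ℕ → Ω → Fin m → ℝ, C.Admissible u' →
        (∀ k : ℕ, 0 < msSq C.Pr (C.traj x0 u' k)) ∧ 0 < C.rateAt x0 u') →
      (sInf {j : ℝ | ∃ u', C.Admissible u' ∧ j = C.J x0 u'}
          = 2 * Real.log (sInf {r : ℝ | ∃ u', C.Admissible u' ∧ r = C.rateAt x0 u'}) ∧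
        ∀ u' : ℕ → Ω → Fin m → ℝ, C.Admissible u' →
          ((∀ u'' : ℕ → Ω → Fin m → ℝ, C.Admissible u'' → C.J x0 u' ≤ C.J x0 u'')
            ↔ (∀ u'' : ℕ → Ω → Fin m → ℝ, C.Admissible u'' →
                C.rateAt x0 u' ≤ C.rateAt x0 u'')))) := by
  refine ⟨C.J_eq_two_mul_log_rateAt hpos hr, fun hall => ?_⟩
  have hJ : ∀ u', C.Admissible u' → C.J x0 u' = 2 * log (C.rateAt x0 u') :=
    fun u' hu' => C.J_eq_two_mul_log_rateAt (hall u' hu').1 (hall u' hu').2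
  have hJset : {j : ℝ | ∃ u', C.Admissible u' ∧ j = C.J x0 u'}
      = (fun r => 2 * log r) '' {r : ℝ | ∃ u', C.Admissible u' ∧ r = C.rateAt x0 u'} := by
    ext j
    constructor
    · rintro ⟨u', hu', rfl⟩
      exact ⟨_, ⟨u', hu', rfl⟩, (hJ u' hu').symm⟩
    · rintro ⟨_, ⟨u', hu', rfl⟩, rfl⟩
      exact ⟨u', hu', (hJ u' hu').symm⟩
  refine ⟨?_, fun u' hu' => forall₂_congr fun u'' hu'' => ?_⟩
  · rw [hJset, sInf_image_mul_log zero_le_two]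
    rintro _ ⟨u', hu', rfl⟩
    exact (hall u' hu').2
  · rw [hJ u' hu', hJ u'' hu'', mul_le_mul_iff_right₀ two_pos,
      log_le_log_iff (hall u' hu').2 (hall u'' hu'').2]

/-- `J(x₀,u) = 2·log ρ(u; x₀)`, and consequently the infima and
the minimizers of `J(x₀,·)` and `ρ(·; x₀)` over admissible policies coincide. -/
theorem J_eq_two_log_rate {n m : ℕ} {Ω : Type} [MeasurableSpace Ω] (C : Ctx n m Ω)
    (hn : 0 < n) (hm : 0 < m)
    (x0 : Ω → Fin n → ℝ) (hx0 : C.InitOK x0)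
    (u : ℕ → Ω → Fin m → ℝ) (hu : C.Admissible u)
    (hpos : ∀ k : ℕ, 0 < msSq C.Pr (C.traj x0 u k))
    (hr : 0 < C.rateAt x0 u) :
    C.J x0 u = 2 * Real.log (C.rateAt x0 u) ∧
    ((∀ u' : ℕ → Ω → Fin m → ℝ, C.Admissible u' →
        (∀ k : ℕ, 0 < msSq C.Pr (C.traj x0 u' k)) ∧ 0 < C.rateAt x0 u') →
      (sInf {j : ℝ | ∃ u', C.Admissible u' ∧ j = C.J x0 u'}
          = 2 * Real.log (sInf {r : ℝ | ∃ u', C.Admissible u' ∧ r = C.rateAt x0 u'}) ∧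
        ∀ u' : ℕ → Ω → Fin m → ℝ, C.Admissible u' →
          ((∀ u'' : ℕ → Ω → Fin m → ℝ, C.Admissible u'' → C.J x0 u' ≤ C.J x0 u'')
            ↔ (∀ u'' : ℕ → Ω → Fin m → ℝ, C.Admissible u'' →
                C.rateAt x0 u' ≤ C.rateAt x0 u'')))) :=
  J_eq_two_log_rate_general C x0 u hpos hr

end SCS
end
end

section
/- Assume R₀ := BᵀB + σ²·B̄ᵀB̄ is positive definite. Fix a > 0 and let S_a := {X symmetric n×n : X ⪰ a·I and Tr X = 1}. Then for all P, Q ∈ S_a, ‖Φ(P) − Φ(Q)‖ ≤ L_Φ(a)·‖P − Q‖, where L_Φ(a) := α_A + 2·α_S²·c_R(a) + α_S²·α_R·c_R(a)². Moreover, sup_{P∈S_a} ‖Φ(P)‖ ≤ C_Φ(a) := α_A + α_S²·c_R(a). -/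
/-!
Write `Φ(P) = T(P) − S(P)·R(P)⁻¹·S(P)ᵀ`, where `T`, `S`, `R` are linear in `P` of operator norm
at most `α_A`, `α_S`, `α_R`. On `S_a` we have `‖P‖ ≤ Tr P = 1`, and `R(P) ⪰ a·R₀ ⪰ a·λ_min(R₀)·I`
gives `‖R(P)⁻¹‖ ≤ c_R(a)`. Telescoping `S₁R₁⁻¹S₁ᵀ − S₂R₂⁻¹S₂ᵀ` through
`R₁⁻¹ − R₂⁻¹ = R₁⁻¹(R₂ − R₁)R₂⁻¹` produces the three terms of `L_Φ(a)`.
-/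

open Matrix MeasureTheory ProbabilityTheory
open scoped ENNReal Classical

noncomputable section

namespace SCS

variable {n m : ℕ}

variable {Ω : Type} [MeasurableSpace Ω]

open scoped Matrix.Norms.L2Operator

section L2OpNorm

variable {ι κ ν ο : Type*}

lemma mul_mul_sub_mul_mul [Fintype κ] [Fintype ν] (X₁ X₂ : Matrix ι κ ℝ) (Y₁ Y₂ : Matrix κ ν ℝ)
    (Z₁ Z₂ : Matrix ν ο ℝ) :
    X₁ * Y₁ * Z₁ - X₂ * Y₂ * Z₂
      = (X₁ - X₂) * Y₁ * Z₁ + X₂ * (Y₁ - Y₂) * Z₁ + X₂ * Y₂ * (Z₁ - Z₂) := by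
  simp only [Matrix.sub_mul, Matrix.mul_sub]
  abel

variable [Fintype ι]

lemma norm_toLp_sq (x : ι → ℝ) : ‖(WithLp.toLp 2 x : EuclideanSpace ℝ ι)‖ ^ 2 = x ⬝ᵥ x := by
  rw [EuclideanSpace.real_norm_sq_eq]
  simp [dotProduct, sq]

lemma dotProduct_self_eq_one_iff (x : ι → ℝ) :
    x ⬝ᵥ x = 1 ↔ ‖(WithLp.toLp 2 x : EuclideanSpace ℝ ι)‖ = 1 := by
  rw [← pow_eq_one_iff_of_nonneg (norm_nonneg _) two_ne_zero, norm_toLp_sq]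

variable [Fintype κ]

lemma dotProduct_transpose_mul_self_mulVec (M : Matrix ι κ ℝ) (x : κ → ℝ) :
    x ⬝ᵥ (Mᵀ * M) *ᵥ x = ‖(WithLp.toLp 2 (M *ᵥ x) : EuclideanSpace ℝ ι)‖ ^ 2 := by
  rw [norm_toLp_sq, ← mulVec_mulVec, dotProduct_mulVec, vecMul_transpose]

variable [Fintype ν] [Fintype ο] [DecidableEq κ] [DecidableEq ν] [DecidableEq ο]

lemma l2_opNorm_mul_mul_le {X : Matrix ι κ ℝ} {Y : Matrix κ ν ℝ} {Z : Matrix ν ο ℝ} {x y z : ℝ}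
    (hX : ‖X‖ ≤ x) (hY : ‖Y‖ ≤ y) (hZ : ‖Z‖ ≤ z) : ‖X * Y * Z‖ ≤ x * y * z := by
  have hx := (norm_nonneg X).trans hX
  have hy := (norm_nonneg Y).trans hY
  calc ‖X * Y * Z‖ ≤ ‖X‖ * ‖Y‖ * ‖Z‖ :=
        (l2_opNorm_mul _ _).trans (by gcongr; exact l2_opNorm_mul _ _)
    _ ≤ x * y * z := by gcongr

variable [DecidableEq ι]

lemma l2_opNorm_transpose (M : Matrix ι κ ℝ) : ‖Mᵀ‖ = ‖M‖ := by
  rw [← conjTranspose_eq_transpose_of_trivial, l2_opNorm_conjTranspose]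

lemma l2_opNorm_le_trace {P : Matrix ι ι ℝ} (hP : P.PosSemidef) : ‖P‖ ≤ P.trace := by
  conv_lhs => rw [hP.1.spectral_theorem, Unitary.conjStarAlgAut_apply, ← Unitary.coe_star,
    CStarRing.norm_mul_coe_unitary, CStarRing.norm_coe_unitary_mul, l2_opNorm_diagonal]
  refine (pi_norm_le_iff_of_nonneg hP.trace_nonneg).2 fun i => ?_
  rw [hP.1.trace_eq_sum_eigenvalues]
  simp only [Function.comp_apply, RCLike.ofReal_real_eq_id, id, Real.norm_eq_abs,
    abs_of_nonneg (hP.eigenvalues_nonneg i)]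
  exact Finset.single_le_sum (fun j _ => hP.eigenvalues_nonneg j) (Finset.mem_univ i)

section Coercive

variable {R : Matrix ι ι ℝ} {r : ℝ}

lemma isUnit_det_of_coercive (hr : 0 < r) (hR : ∀ v : ι → ℝ, r * (v ⬝ᵥ v) ≤ v ⬝ᵥ R *ᵥ v) :
    IsUnit R.det := by
  refine isUnit_iff_ne_zero.2 fun hdet => ?_
  obtain ⟨v, hv, hRv⟩ := exists_mulVec_eq_zero_iff.2 hdet
  have h := hR v
  rw [hRv, dotProduct_zero] at h
  exact hv <| dotProduct_self_eq_zero.1 <|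
    le_antisymm (nonpos_of_mul_nonpos_right h hr) (dotProduct_self_star_nonneg v)

lemma l2_opNorm_inv_le_of_coercive (hr : 0 < r)
    (hR : ∀ v : ι → ℝ, r * (v ⬝ᵥ v) ≤ v ⬝ᵥ R *ᵥ v) : ‖R⁻¹‖ ≤ r⁻¹ := by
  rw [l2_opNorm_def]
  refine ContinuousLinearMap.opNorm_le_bound _ (inv_nonneg.2 hr.le) fun x => ?_
  set y := R⁻¹ *ᵥ x.ofLp
  have hRy : R *ᵥ y = x.ofLp := by
    rw [mulVec_mulVec, mul_nonsing_inv _ (isUnit_det_of_coercive hr hR), one_mulVec]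
  have hCS : y ⬝ᵥ x.ofLp ≤ ‖(WithLp.toLp 2 y : EuclideanSpace ℝ ι)‖ * ‖x‖ := by
    simpa [EuclideanSpace.inner_eq_star_dotProduct, dotProduct_comm] using
      real_inner_le_norm (WithLp.toLp 2 y : EuclideanSpace ℝ ι) x
  have hy := hR y
  rw [hRy, ← norm_toLp_sq] at hy
  change ‖(WithLp.toLp 2 y : EuclideanSpace ℝ ι)‖ ≤ r⁻¹ * ‖x‖
  rw [le_inv_mul_iff₀ hr]
  nlinarith [norm_nonneg (WithLp.toLp 2 y : EuclideanSpace ℝ ι), norm_nonneg x]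

end Coercive

lemma l2_opNorm_mul_inv_mul_transpose_sub_le {S₁ S₂ : Matrix ι κ ℝ} {R₁ R₂ : Matrix κ κ ℝ}
    {s c ρ d : ℝ} (hR₁ : IsUnit R₁.det) (hR₂ : IsUnit R₂.det)
    (hS₁ : ‖S₁‖ ≤ s) (hS₂ : ‖S₂‖ ≤ s) (hc₁ : ‖R₁⁻¹‖ ≤ c) (hc₂ : ‖R₂⁻¹‖ ≤ c)
    (hS : ‖S₁ - S₂‖ ≤ s * d) (hR : ‖R₁ - R₂‖ ≤ ρ * d) :
    ‖S₁ * R₁⁻¹ * S₁ᵀ - S₂ * R₂⁻¹ * S₂ᵀ‖ ≤ (2 * s ^ 2 * c + s ^ 2 * ρ * c ^ 2) * d := by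
  have hinv : ‖R₁⁻¹ - R₂⁻¹‖ ≤ c * (ρ * d) * c := by
    rw [inv_sub_inv (by simp only [isUnit_iff_isUnit_det, hR₁, hR₂])]
    exact l2_opNorm_mul_mul_le hc₁ (by rwa [norm_sub_rev]) hc₂
  have hST : ‖S₁ᵀ - S₂ᵀ‖ ≤ s * d := by rwa [← transpose_sub, l2_opNorm_transpose]
  have hS₁T : ‖S₁ᵀ‖ ≤ s := by rwa [l2_opNorm_transpose]
  rw [mul_mul_sub_mul_mul]
  calc _ ≤ s * d * c * s + s * (c * (ρ * d) * c) * s + s * c * (s * d) :=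
        (norm_add₃_le ..).trans <| add_le_add_three (l2_opNorm_mul_mul_le hS hc₁ hS₁T)
          (l2_opNorm_mul_mul_le hS₂ hinv hS₁T) (l2_opNorm_mul_mul_le hS₂ hc₂ hST)
    _ = (2 * s ^ 2 * c + s ^ 2 * ρ * c ^ 2) * d := by ring

end L2OpNorm

section Rayleigh

variable {p q : ℕ}

lemma specNorm_eq_l2_opNorm (M : Matrix (Fin p) (Fin q) ℝ) : specNorm M = ‖M‖ := by
  have hle : ∀ x : {x : Fin q → ℝ // x ⬝ᵥ x = 1}, x.1 ⬝ᵥ (Mᵀ * M) *ᵥ x.1 ≤ ‖M‖ ^ 2 := by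
    rintro ⟨x, hx⟩
    rw [dotProduct_transpose_mul_self_mulVec]
    gcongr
    simpa [(dotProduct_self_eq_one_iff x).1 hx] using M.l2_opNorm_mulVec (WithLp.toLp 2 x)
  refine le_antisymm (Real.sqrt_le_iff.2 ⟨norm_nonneg M, Real.iSup_le hle (sq_nonneg _)⟩) ?_
  rw [l2_opNorm_def]
  refine ContinuousLinearMap.opNorm_le_of_unit_norm (Real.sqrt_nonneg _) fun x hx => ?_
  have hx₁ : x.ofLp ⬝ᵥ x.ofLp = 1 := (dotProduct_self_eq_one_iff _).2 hx
  have h := le_ciSup ⟨_, Set.forall_mem_range.2 hle⟩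
    (⟨x.ofLp, hx₁⟩ : {x : Fin q → ℝ // x ⬝ᵥ x = 1})
  rw [dotProduct_transpose_mul_self_mulVec] at h
  exact Real.le_sqrt_of_sq_le h

lemma isCompact_dotProduct_self_eq_one : IsCompact {x : Fin p → ℝ | x ⬝ᵥ x = 1} := by
  convert (isCompact_sphere (0 : EuclideanSpace ℝ (Fin p)) 1).image (PiLp.continuous_ofLp 2 _)
  ext x
  rw [Set.mem_ofPred_eq, dotProduct_self_eq_one_iff, Set.mem_image]
  exact ⟨fun h => ⟨_, by simpa using h, rfl⟩, by rintro ⟨y, hy, rfl⟩; simpa using hy⟩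

lemma continuous_dotProduct_mulVec_self (N : Matrix (Fin p) (Fin p) ℝ) :
    Continuous fun x : Fin p → ℝ => x ⬝ᵥ N *ᵥ x := by
  fun_prop

lemma bddBelow_range_dotProduct_mulVec_self (N : Matrix (Fin p) (Fin p) ℝ) :
    BddBelow (Set.range fun x : {x : Fin p → ℝ // x ⬝ᵥ x = 1} => x.1 ⬝ᵥ N *ᵥ x.1) := by
  simpa [Set.image, Set.range] using isCompact_dotProduct_self_eq_one.bddBelow_image
    (continuous_dotProduct_mulVec_self N).continuousOn

lemma lamMin_mul_dotProduct_le (N : Matrix (Fin p) (Fin p) ℝ) (x : Fin p → ℝ) :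
    lamMin N * (x ⬝ᵥ x) ≤ x ⬝ᵥ N *ᵥ x := by
  rcases eq_or_ne x 0 with rfl | hx
  · simp
  set t := ‖(WithLp.toLp 2 x : EuclideanSpace ℝ (Fin p))‖
  have ht : 0 < t := norm_pos_iff.2 (by simpa using hx)
  have hu : (t⁻¹ • x) ⬝ᵥ (t⁻¹ • x) = 1 := by
    rw [dotProduct_self_eq_one_iff]
    simp [norm_smul, t, ht.ne']
  have h : lamMin N ≤ t⁻¹ * (t⁻¹ * (x ⬝ᵥ N *ᵥ x)) := by
    simpa only [lamMin, mulVec_smul, smul_dotProduct, dotProduct_smul, smul_eq_mul] using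
      ciInf_le (bddBelow_range_dotProduct_mulVec_self N) ⟨_, hu⟩
  rw [← norm_toLp_sq]
  calc lamMin N * t ^ 2 ≤ t⁻¹ * (t⁻¹ * (x ⬝ᵥ N *ᵥ x)) * t ^ 2 := by gcongr
    _ = x ⬝ᵥ N *ᵥ x := by field_simp

lemma lamMin_pos {N : Matrix (Fin p) (Fin p) ℝ} (hp : 0 < p) (hN : N.PosDef) : 0 < lamMin N := by
  obtain ⟨x₀, hx₀, hmin⟩ := isCompact_dotProduct_self_eq_one.exists_isMinOn
    ⟨Pi.single ⟨0, hp⟩ 1, by simp⟩ (continuous_dotProduct_mulVec_self N).continuousOn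
  have : Nonempty {x : Fin p → ℝ // x ⬝ᵥ x = 1} := ⟨⟨x₀, hx₀⟩⟩
  have hx₀0 : x₀ ≠ 0 := by
    rintro rfl
    simp at hx₀
  calc 0 < x₀ ⬝ᵥ N *ᵥ x₀ := by simpa using hN.dotProduct_mulVec_pos hx₀0
    _ ≤ lamMin N := le_ciInf fun y => hmin y.2

end Rayleigh

section NoisyConj

variable {ι κ ν : Type*} [Fintype ι]

/-- `noisyConj σ M M' N N' X = E[(M + ωM')ᵀ X (N + ωN')]` for `ω ~ N(0, σ²)`. -/
def noisyConj (σ : ℝ) (M M' : Matrix ι κ ℝ) (N N' : Matrix ι ν ℝ) :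
    Matrix ι ι ℝ →ₗ[ℝ] Matrix κ ν ℝ where
  toFun X := Mᵀ * X * N + σ ^ 2 • (M'ᵀ * X * N')
  map_add' X Y := by
    simp only [Matrix.mul_add, Matrix.add_mul, smul_add]
    abel
  map_smul' c X := by
    simp only [Matrix.mul_smul, Matrix.smul_mul, smul_add, smul_comm c, RingHom.id_apply]

lemma noisyConj_apply (σ : ℝ) (M M' : Matrix ι κ ℝ) (N N' : Matrix ι ν ℝ) (X : Matrix ι ι ℝ) :
    noisyConj σ M M' N N' X = Mᵀ * X * N + σ ^ 2 • (M'ᵀ * X * N') :=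
  rfl

lemma l2_opNorm_noisyConj_le [Fintype κ] [Fintype ν] [DecidableEq ι] [DecidableEq κ]
    [DecidableEq ν] (σ : ℝ) (M M' : Matrix ι κ ℝ) (N N' : Matrix ι ν ℝ) (X : Matrix ι ι ℝ) :
    ‖noisyConj σ M M' N N' X‖ ≤ (‖M‖ * ‖N‖ + σ ^ 2 * ‖M'‖ * ‖N'‖) * ‖X‖ := by
  have h : ∀ (M : Matrix ι κ ℝ) (N : Matrix ι ν ℝ), ‖Mᵀ * X * N‖ ≤ ‖M‖ * ‖X‖ * ‖N‖ :=
    fun M N => l2_opNorm_mul_mul_le (l2_opNorm_transpose M).le le_rfl le_rfl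
  calc ‖noisyConj σ M M' N N' X‖ ≤ ‖Mᵀ * X * N‖ + σ ^ 2 * ‖M'ᵀ * X * N'‖ := by
        rw [noisyConj_apply]
        refine (norm_add_le _ _).trans_eq ?_
        rw [norm_smul, Real.norm_of_nonneg (sq_nonneg σ)]
    _ ≤ ‖M‖ * ‖X‖ * ‖N‖ + σ ^ 2 * (‖M'‖ * ‖X‖ * ‖N'‖) := by gcongr <;> exact h _ _
    _ = (‖M‖ * ‖N‖ + σ ^ 2 * ‖M'‖ * ‖N'‖) * ‖X‖ := by ring

lemma posSemidef_noisyConj [Fintype κ] {X : Matrix ι ι ℝ} (hX : X.PosSemidef) (σ : ℝ)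
    (M M' : Matrix ι κ ℝ) : (noisyConj σ M M' M M' X).PosSemidef := by
  have h := fun M : Matrix ι κ ℝ => hX.conjTranspose_mul_mul_same M
  simp only [conjTranspose_eq_transpose_of_trivial] at h
  exact (h M).add ((h M').smul (sq_nonneg σ))

end NoisyConj

section Riccati

variable {n m : ℕ} {σ : ℝ} {A Abar : Matrix (Fin n) (Fin n) ℝ} {B Bbar : Matrix (Fin n) (Fin m) ℝ}

lemma Rop_eq_noisyConj : Rop σ B Bbar = noisyConj σ B Bbar B Bbar :=
  rfl

lemma Sop_eq_noisyConj : Sop σ A Abar B Bbar = noisyConj σ A Abar B Bbar :=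
  rfl

lemma Phi_eq_noisyConj_sub (P : Matrix (Fin n) (Fin n) ℝ) :
    Phi σ A Abar B Bbar P = noisyConj σ A Abar A Abar P
      - Sop σ A Abar B Bbar P * (Rop σ B Bbar P)⁻¹ * (Sop σ A Abar B Bbar P)ᵀ :=
  rfl

lemma alphaA_eq : alphaA σ A Abar = ‖A‖ * ‖A‖ + σ ^ 2 * ‖Abar‖ * ‖Abar‖ := by
  rw [alphaA, specNorm_eq_l2_opNorm, specNorm_eq_l2_opNorm]
  ring

lemma alphaS_eq : alphaS σ A Abar B Bbar = ‖A‖ * ‖B‖ + σ ^ 2 * ‖Abar‖ * ‖Bbar‖ := by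
  simp only [alphaS, specNorm_eq_l2_opNorm]

lemma alphaR_eq : alphaR σ B Bbar = ‖B‖ * ‖B‖ + σ ^ 2 * ‖Bbar‖ * ‖Bbar‖ := by
  rw [alphaR, specNorm_eq_l2_opNorm, specNorm_eq_l2_opNorm]
  ring

lemma alphaS_nonneg : 0 ≤ alphaS σ A Abar B Bbar := by
  rw [alphaS_eq]
  positivity

lemma l2_opNorm_Sop_le_alphaS_mul (X : Matrix (Fin n) (Fin n) ℝ) :
    ‖Sop σ A Abar B Bbar X‖ ≤ alphaS σ A Abar B Bbar * ‖X‖ :=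
  alphaS_eq ▸ l2_opNorm_noisyConj_le σ A Abar B Bbar X

lemma l2_opNorm_Sop_le_alphaS {P : Matrix (Fin n) (Fin n) ℝ} (hP : ‖P‖ ≤ 1) :
    ‖Sop σ A Abar B Bbar P‖ ≤ alphaS σ A Abar B Bbar :=
  (l2_opNorm_Sop_le_alphaS_mul P).trans (mul_le_of_le_one_right alphaS_nonneg hP)

lemma l2_opNorm_noisyConj_le_alphaA_mul (X : Matrix (Fin n) (Fin n) ℝ) :
    ‖noisyConj σ A Abar A Abar X‖ ≤ alphaA σ A Abar * ‖X‖ :=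
  alphaA_eq ▸ l2_opNorm_noisyConj_le σ A Abar A Abar X

lemma l2_opNorm_Phi_sub_le {P Q : Matrix (Fin n) (Fin n) ℝ} {c : ℝ}
    (hP : ‖P‖ ≤ 1) (hQ : ‖Q‖ ≤ 1)
    (hRP : IsUnit (Rop σ B Bbar P).det) (hRQ : IsUnit (Rop σ B Bbar Q).det)
    (hcP : ‖(Rop σ B Bbar P)⁻¹‖ ≤ c) (hcQ : ‖(Rop σ B Bbar Q)⁻¹‖ ≤ c) :
    ‖Phi σ A Abar B Bbar P - Phi σ A Abar B Bbar Q‖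
      ≤ (alphaA σ A Abar + 2 * alphaS σ A Abar B Bbar ^ 2 * c
          + alphaS σ A Abar B Bbar ^ 2 * alphaR σ B Bbar * c ^ 2) * ‖P - Q‖ := by
  have hS : ‖Sop σ A Abar B Bbar P - Sop σ A Abar B Bbar Q‖
      ≤ alphaS σ A Abar B Bbar * ‖P - Q‖ := by
    rw [Sop_eq_noisyConj, ← map_sub, ← Sop_eq_noisyConj]
    exact l2_opNorm_Sop_le_alphaS_mul _
  have hR : ‖Rop σ B Bbar P - Rop σ B Bbar Q‖ ≤ alphaR σ B Bbar * ‖P - Q‖ := by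
    rw [Rop_eq_noisyConj, ← map_sub, alphaR_eq]
    exact l2_opNorm_noisyConj_le σ B Bbar B Bbar _
  rw [Phi_eq_noisyConj_sub, Phi_eq_noisyConj_sub, sub_sub_sub_comm, ← map_sub, add_assoc, add_mul]
  exact (norm_sub_le _ _).trans <| add_le_add (l2_opNorm_noisyConj_le_alphaA_mul _) <|
    l2_opNorm_mul_inv_mul_transpose_sub_le hRP hRQ (l2_opNorm_Sop_le_alphaS hP)
      (l2_opNorm_Sop_le_alphaS hQ) hcP hcQ hS hR

lemma l2_opNorm_Phi_le {P : Matrix (Fin n) (Fin n) ℝ} {c : ℝ} (hP : ‖P‖ ≤ 1)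
    (hc : ‖(Rop σ B Bbar P)⁻¹‖ ≤ c) :
    ‖Phi σ A Abar B Bbar P‖ ≤ alphaA σ A Abar + alphaS σ A Abar B Bbar ^ 2 * c := by
  have hS : ‖Sop σ A Abar B Bbar P‖ ≤ alphaS σ A Abar B Bbar := l2_opNorm_Sop_le_alphaS hP
  have hT : ‖noisyConj σ A Abar A Abar P‖ ≤ alphaA σ A Abar :=
    (l2_opNorm_noisyConj_le_alphaA_mul P).trans
      (mul_le_of_le_one_right (by rw [alphaA_eq]; positivity) hP)
  rw [Phi_eq_noisyConj_sub]
  calc _ ≤ alphaA σ A Abar + alphaS σ A Abar B Bbar * c * alphaS σ A Abar B Bbar :=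
        (norm_sub_le _ _).trans <|
          add_le_add hT (l2_opNorm_mul_mul_le hS hc (by rwa [l2_opNorm_transpose]))
    _ = alphaA σ A Abar + alphaS σ A Abar B Bbar ^ 2 * c := by ring

variable {a : ℝ} {P : Matrix (Fin n) (Fin n) ℝ}

lemma posSemidef_of_mem_Slice (ha : 0 ≤ a) (hP : P ∈ Slice a) : P.PosSemidef := by
  simpa using hP.2.1.add (PosSemidef.one.smul ha)

lemma l2_opNorm_le_one_of_mem_Slice (ha : 0 ≤ a) (hP : P ∈ Slice a) : ‖P‖ ≤ 1 :=
  (l2_opNorm_le_trace (posSemidef_of_mem_Slice ha hP)).trans hP.2.2.le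

lemma coercive_Rop_of_mem_Slice (ha : 0 ≤ a) (hP : P ∈ Slice a) (v : Fin m → ℝ) :
    a * lamMin (Bᵀ * B + σ ^ 2 • (Bbarᵀ * Bbar)) * (v ⬝ᵥ v) ≤ v ⬝ᵥ Rop σ B Bbar P *ᵥ v := by
  have hR : Rop σ B Bbar P
      = Rop σ B Bbar (P - a • 1) + a • (Bᵀ * B + σ ^ 2 • (Bbarᵀ * Bbar)) := by
    rw [Rop_eq_noisyConj, map_sub, map_smul, noisyConj_apply σ B Bbar B Bbar 1]
    simp only [Matrix.mul_one, sub_add_cancel]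
  have h₀ : 0 ≤ v ⬝ᵥ Rop σ B Bbar (P - a • 1) *ᵥ v := by
    simpa only [star_trivial, Rop_eq_noisyConj] using
      (posSemidef_noisyConj hP.2.1 σ B Bbar).dotProduct_mulVec_nonneg v
  have h₁ := mul_le_mul_of_nonneg_left
    (lamMin_mul_dotProduct_le (Bᵀ * B + σ ^ 2 • (Bbarᵀ * Bbar)) v) ha
  rw [hR, add_mulVec, dotProduct_add, smul_mulVec, dotProduct_smul, smul_eq_mul]
  linarith

end Riccati

theorem phi_lipschitz_general {n m : ℕ} (hm : 0 < m)
    (σ : ℝ)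
    (A Abar : Matrix (Fin n) (Fin n) ℝ) (B Bbar : Matrix (Fin n) (Fin m) ℝ)
    (hR0 : (Bᵀ * B + σ ^ 2 • (Bbarᵀ * Bbar)).PosDef)
    (a : ℝ) (ha : 0 < a) :
    (∀ P Q : Matrix (Fin n) (Fin n) ℝ, P ∈ Slice a → Q ∈ Slice a →
      specNorm (Phi σ A Abar B Bbar P - Phi σ A Abar B Bbar Q)
        ≤ LPhi σ A Abar B Bbar a * specNorm (P - Q)) ∧
    (∀ P : Matrix (Fin n) (Fin n) ℝ, P ∈ Slice a →
      specNorm (Phi σ A Abar B Bbar P) ≤ CPhi σ A Abar B Bbar a) := by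
  have hr : 0 < a * lamMin (Bᵀ * B + σ ^ 2 • (Bbarᵀ * Bbar)) := mul_pos ha (lamMin_pos hm hR0)
  have hdet : ∀ P ∈ Slice a, IsUnit (Rop σ B Bbar P).det := fun P hP =>
    isUnit_det_of_coercive hr (coercive_Rop_of_mem_Slice ha.le hP)
  have hinv : ∀ P ∈ Slice a, ‖(Rop σ B Bbar P)⁻¹‖ ≤ cR σ B Bbar a := fun P hP =>
    (l2_opNorm_inv_le_of_coercive hr (coercive_Rop_of_mem_Slice ha.le hP)).trans_eq
      (one_div _).symm
  simp only [specNorm_eq_l2_opNorm]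
  exact ⟨fun P Q hP hQ => l2_opNorm_Phi_sub_le (l2_opNorm_le_one_of_mem_Slice ha.le hP)
      (l2_opNorm_le_one_of_mem_Slice ha.le hQ) (hdet P hP) (hdet Q hQ) (hinv P hP) (hinv Q hQ),
    fun P hP => l2_opNorm_Phi_le (l2_opNorm_le_one_of_mem_Slice ha.le hP) (hinv P hP)⟩

/-- Lipschitz continuity of `Φ` on the interior slice `S_a`:
`‖Φ(P) − Φ(Q)‖ ≤ L_Φ(a)·‖P − Q‖`, and `‖Φ(P)‖ ≤ C_Φ(a)` on `S_a`. -/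
theorem phi_lipschitz {n m : ℕ} (hn : 0 < n) (hm : 0 < m)
    (σ : ℝ) (hσ : 0 < σ)
    (A Abar : Matrix (Fin n) (Fin n) ℝ) (B Bbar : Matrix (Fin n) (Fin m) ℝ)
    (hR0 : (Bᵀ * B + σ ^ 2 • (Bbarᵀ * Bbar)).PosDef)
    (a : ℝ) (ha : 0 < a) :
    (∀ P Q : Matrix (Fin n) (Fin n) ℝ, P ∈ Slice a → Q ∈ Slice a →
      specNorm (Phi σ A Abar B Bbar P - Phi σ A Abar B Bbar Q)
        ≤ LPhi σ A Abar B Bbar a * specNorm (P - Q)) ∧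
    (∀ P : Matrix (Fin n) (Fin n) ℝ, P ∈ Slice a →
      specNorm (Phi σ A Abar B Bbar P) ≤ CPhi σ A Abar B Bbar a) :=
  phi_lipschitz_general hm σ A Abar B Bbar hR0 a ha

end SCS
end
end
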